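/- If (G, ≡, -1) is a special group, then M(G) = G ∪ {0}, with product extending that of G (and a·0 = 0), negation -a = (-1)·a, and multivalued sum a+0 = {a}, 0+b = {b}, a+(-a) = M(G) for a ≠ 0, and a+b = D_G(a,b) otherwise, is a hyperfield. -/

import Mathlib

/-- A multiring structure (multivalued addition) on a carrier `R`. -/
structure MulRingOps (R : Type*) where
  add : R → R → Set R
  mul : R → R → R
  neg : R → R
  zero : R
  one : R

namespace MulRingOps

variable {R : Type*}

/-- The multiring axioms. -/
structure IsMulRing (S : MulRingOps R) : Prop where
  add_nonempty : ∀ a b, (S.add a b).Nonempty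
  add_comm : ∀ a b, S.add a b = S.add b a
  rev_left : ∀ {x y z}, z ∈ S.add x y → x ∈ S.add z (S.neg y)
  rev_right : ∀ {x y z}, z ∈ S.add x y → y ∈ S.add (S.neg x) z
  zero_add : ∀ x y, y ∈ S.add S.zero x ↔ x = y
  add_assoc : ∀ x y z : R,
    (⋃ w ∈ S.add y z, S.add x w) = (⋃ t ∈ S.add x y, S.add t z)
  mul_comm : ∀ a b, S.mul a b = S.mul b a
  mul_assoc : ∀ a b c, S.mul (S.mul a b) c = S.mul a (S.mul b c)
  one_mul : ∀ a, S.mul S.one a = a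
  mul_zero : ∀ a, S.mul a S.zero = S.zero
  distrib : ∀ {a b c : R} (d : R), c ∈ S.add a b →
    S.mul c d ∈ S.add (S.mul a d) (S.mul b d)

/-- A hyperfield: a multiring with `0 ≠ 1` in which every nonzero element is invertible. -/
structure IsHyperfield (S : MulRingOps R) extends IsMulRing S : Prop where
  zero_ne_one : S.zero ≠ S.one
  exists_inv : ∀ a, a ≠ S.zero → ∃ b, S.mul a b = S.one

/-- A hyperfield is hyperbolic when `1 - 1` is everything. -/
def IsHyperbolic (S : MulRingOps R) : Prop :=
  S.add S.one (S.neg S.one) = Set.univ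

/-- Morphisms of multirings. -/
def IsHom {A B : Type*} (S : MulRingOps A) (T : MulRingOps B) (f : A → B) : Prop :=
  (∀ {a b c}, c ∈ S.add a b → f c ∈ T.add (f a) (f b)) ∧
  (∀ a, f (S.neg a) = T.neg (f a)) ∧
  f S.zero = T.zero ∧
  (∀ a b, f (S.mul a b) = T.mul (f a) (f b)) ∧
  f S.one = T.one

end MulRingOps

/-- The data of a (pre-)special group structure on an exponent-2 group `G`:
the distinguished element `-1` and the binary relation `≡` on `G × G`
(`rel a b c d` means `⟨a,b⟩ ≡ ⟨c,d⟩`). -/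
structure SpecialGroupOps (G : Type*) [CommGroup G] where
  m1 : G
  rel : G → G → G → G → Prop

namespace SpecialGroupOps

variable {G : Type*} [CommGroup G]

/-- The extension of `≡` to triples: `⟨a₁,a₂,a₃⟩ ≡₃ ⟨b₁,b₂,b₃⟩` iff there are `x,y,z` with
`⟨a₁,x⟩ ≡ ⟨b₁,y⟩`, `⟨a₂,a₃⟩ ≡ ⟨x,z⟩` and `⟨b₂,b₃⟩ ≡ ⟨y,z⟩`. -/
def rel3 (Sp : SpecialGroupOps G) (a₁ a₂ a₃ b₁ b₂ b₃ : G) : Prop :=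
  ∃ x y z, Sp.rel a₁ x b₁ y ∧ Sp.rel a₂ a₃ x z ∧ Sp.rel b₂ b₃ y z

/-- The special group axioms SG0–SG6 (with `-a := (-1)·a`). -/
structure IsSpecialGroup (Sp : SpecialGroupOps G) : Prop where
  exp2 : ∀ g : G, g * g = 1
  refl : ∀ a b, Sp.rel a b a b
  symm : ∀ {a b c d}, Sp.rel a b c d → Sp.rel c d a b
  trans : ∀ {a b c d e f}, Sp.rel a b c d → Sp.rel c d e f → Sp.rel a b e f
  sg1 : ∀ a b, Sp.rel a b b a
  sg2 : ∀ a, Sp.rel a (Sp.m1 * a) 1 Sp.m1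
  sg3 : ∀ {a b c d}, Sp.rel a b c d → a * b = c * d
  sg4 : ∀ {a b c d}, Sp.rel a b c d → Sp.rel a (Sp.m1 * c) (Sp.m1 * b) d
  sg5 : ∀ {a b c d} (g : G), Sp.rel a b c d → Sp.rel (g * a) (g * b) (g * c) (g * d)
  sg6 : ∀ {a₁ a₂ a₃ b₁ b₂ b₃ c₁ c₂ c₃ : G},
    rel3 Sp a₁ a₂ a₃ b₁ b₂ b₃ → rel3 Sp b₁ b₂ b₃ c₁ c₂ c₃ → rel3 Sp a₁ a₂ a₃ c₁ c₂ c₃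

/-- The representation set `D_G(a,b) = {x : ∃ y, ⟨x,y⟩ ≡ ⟨a,b⟩}`. -/
def DG (Sp : SpecialGroupOps G) (a b : G) : Set G :=
  {x | ∃ y, Sp.rel x y a b}

open Classical in
/-- The multiring operations of `M(G) = G ∪ {0}` (with `none` playing the role of `0`):
`a+0 = {a}`, `0+b = {b}`, `a+(-a) = M(G)` for `a ≠ 0`, and `a+b = D_G(a,b)` otherwise. -/
noncomputable def mOps (Sp : SpecialGroupOps G) : MulRingOps (Option G) where
  add x y :=
    match x, y with
    | none, y => {y}
    | x, none => {x}
    | some a, some b => if b = Sp.m1 * a then Set.univ else some '' DG Sp a b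
  mul x y :=
    match x, y with
    | some a, some b => some (a * b)
    | _, _ => none
  neg := Option.map (Sp.m1 * ·)
  zero := none
  one := some 1

end SpecialGroupOps

/-! The axiom SG6 makes the ternary relation `≡₃` transitive; since it is also invariant under
the permutations generated by SG1, it can rotate a representation `x ∈ D(a, D(b,c))` into one
`x ∈ D(D(a,b), c)`, which is associativity of the multivalued sum away from `0` and `a + (-a)`.
The remaining multiring axioms reduce, case by case on `0`, to SG1, SG2, SG4 and SG5. -/

namespace MulRingOps

variable {R : Type*}

theorem add_assoc_of_subset (S : MulRingOps R) (hcomm : ∀ a b, S.add a b = S.add b a)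
    (hsub : ∀ x y z, (⋃ w ∈ S.add y z, S.add x w) ⊆ (⋃ t ∈ S.add x y, S.add t z))
    (x y z : R) : (⋃ w ∈ S.add y z, S.add x w) = (⋃ t ∈ S.add x y, S.add t z) := by
  refine (hsub x y z).antisymm fun u hu => ?_
  simp only [Set.mem_iUnion, exists_prop] at hu ⊢
  obtain ⟨t, ht, hut⟩ := hu
  rw [hcomm] at ht hut
  have := hsub z y x (Set.mem_biUnion ht hut)
  simp only [Set.mem_iUnion, exists_prop] at this
  obtain ⟨w, hw, huw⟩ := this
  exact ⟨w, hcomm z y ▸ hw, hcomm w x ▸ huw⟩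

theorem rev_right_of_rev_left (S : MulRingOps R) (hcomm : ∀ a b, S.add a b = S.add b a)
    (hrev : ∀ {x y z}, z ∈ S.add x y → x ∈ S.add z (S.neg y)) {x y z : R}
    (hz : z ∈ S.add x y) : y ∈ S.add (S.neg x) z := by
  rw [hcomm] at hz ⊢
  exact hrev hz

end MulRingOps

namespace SpecialGroupOps

variable {G : Type*} [CommGroup G] {Sp : SpecialGroupOps G}

namespace IsSpecialGroup

theorem m1_mul_m1_mul (h : Sp.IsSpecialGroup) (a : G) : Sp.m1 * (Sp.m1 * a) = a := by
  rw [← mul_assoc, h.exp2, one_mul]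

theorem mem_DG_comm (h : Sp.IsSpecialGroup) {a b x : G} (hx : x ∈ DG Sp a b) :
    x ∈ DG Sp b a :=
  let ⟨y, hy⟩ := hx
  ⟨y, h.trans hy (h.sg1 a b)⟩

theorem left_mem_DG (h : Sp.IsSpecialGroup) (a b : G) : a ∈ DG Sp a b :=
  ⟨b, h.refl a b⟩

theorem DG_m1_mul_self (h : Sp.IsSpecialGroup) (a : G) : DG Sp a (Sp.m1 * a) = Set.univ :=
  Set.eq_univ_of_forall fun x => ⟨Sp.m1 * x, h.trans (h.sg2 x) (h.symm (h.sg2 a))⟩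

theorem mem_DG_m1_mul_of_mem_DG (h : Sp.IsSpecialGroup) {a b c : G} (hc : c ∈ DG Sp a b) :
    a ∈ DG Sp c (Sp.m1 * b) := by
  obtain ⟨w, hw⟩ := hc
  have := h.sg4 (h.trans (h.sg4 (h.symm hw)) (h.sg1 (Sp.m1 * b) w))
  rw [h.m1_mul_m1_mul] at this
  exact ⟨Sp.m1 * w, this⟩

theorem m1_mul_mem_DG_of_m1_mul_mem_DG (h : Sp.IsSpecialGroup) {a b c : G}
    (ha : Sp.m1 * a ∈ DG Sp b c) : Sp.m1 * c ∈ DG Sp a b := by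
  obtain ⟨y, hy⟩ := ha
  have := h.sg4 (h.symm hy)
  rw [h.m1_mul_m1_mul] at this
  exact ⟨y, h.symm (h.trans (h.sg1 a b) this)⟩

theorem mul_mem_DG (h : Sp.IsSpecialGroup) {a b x : G} (hx : x ∈ DG Sp a b) (g : G) :
    x * g ∈ DG Sp (a * g) (b * g) := by
  obtain ⟨y, hy⟩ := hx
  exact ⟨y * g, by simpa only [mul_comm _ g] using h.sg5 g hy⟩

/-- Composition of the transpositions `(1 3)` and `(2 3)`, both instances of SG1, through SG6. -/
theorem rel3_rotate (h : Sp.IsSpecialGroup) (a b c : G) : Sp.rel3 a b c c a b :=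
  h.sg6 ⟨c, a, b, h.sg1 a c, h.sg1 b c, h.sg1 b a⟩ ⟨b, b, a, h.refl c b, h.refl b a, h.sg1 a b⟩

theorem mem_DG_assoc (h : Sp.IsSpecialGroup) {a b c d x : G} (hd : d ∈ DG Sp b c)
    (hx : x ∈ DG Sp a d) : ∃ e ∈ DG Sp a b, x ∈ DG Sp e c := by
  obtain ⟨z, hz⟩ := hd
  obtain ⟨y, hy⟩ := hx
  obtain ⟨y', e, w, hxe, -, he⟩ :=
    h.sg6 ⟨y, d, z, hy, h.refl y z, h.symm hz⟩ (h.rel3_rotate a b c)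
  exact ⟨e, ⟨w, h.symm he⟩, h.mem_DG_comm ⟨y', hxe⟩⟩

theorem eq_m1_mul_comm (h : Sp.IsSpecialGroup) {a b : G} : b = Sp.m1 * a ↔ a = Sp.m1 * b := by
  constructor <;> rintro rfl <;> exact (h.m1_mul_m1_mul _).symm

end IsSpecialGroup

@[simp]
theorem mOps_add_none_left (y : Option G) : (mOps Sp).add none y = {y} := by
  cases y <;> rfl

@[simp]
theorem mOps_add_none_right (x : Option G) : (mOps Sp).add x none = {x} := by
  cases x <;> rfl

@[simp]
theorem none_mem_mOps_add {a b : G} :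
    (none : Option G) ∈ (mOps Sp).add (some a) (some b) ↔ b = Sp.m1 * a := by
  simp [mOps]

@[simp]
theorem mOps_neg_some (a : G) : (mOps Sp).neg (some a) = some (Sp.m1 * a) := rfl

@[simp]
theorem mOps_neg_none : (mOps Sp).neg none = none := rfl

@[simp]
theorem mOps_mul_some_some (a b : G) : (mOps Sp).mul (some a) (some b) = some (a * b) := rfl

@[simp]
theorem mOps_mul_none_left (y : Option G) : (mOps Sp).mul none y = none := rfl

@[simp]
theorem mOps_mul_none_right (x : Option G) : (mOps Sp).mul x none = none := by
  cases x <;> rfl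

namespace IsSpecialGroup

theorem some_mem_mOps_add (h : Sp.IsSpecialGroup) {a b x : G} :
    some x ∈ (mOps Sp).add (some a) (some b) ↔ x ∈ DG Sp a b := by
  by_cases hb : b = Sp.m1 * a
  · simp [mOps, hb, h.DG_m1_mul_self]
  · simp [mOps, hb]

theorem mOps_add_nonempty (h : Sp.IsSpecialGroup) (x y : Option G) :
    ((mOps Sp).add x y).Nonempty := by
  rcases x with _ | a
  · exact ⟨y, by simp⟩
  rcases y with _ | b
  · simp
  · exact ⟨some a, h.some_mem_mOps_add.2 (h.left_mem_DG a b)⟩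

theorem mOps_add_comm (h : Sp.IsSpecialGroup) (x y : Option G) :
    (mOps Sp).add x y = (mOps Sp).add y x := by
  rcases x with _ | a <;> rcases y with _ | b <;> try simp
  ext (_ | u)
  · simpa using h.eq_m1_mul_comm
  · simpa [h.some_mem_mOps_add] using ⟨h.mem_DG_comm, h.mem_DG_comm⟩

theorem mOps_rev_left (h : Sp.IsSpecialGroup) {x y z : Option G} (hz : z ∈ (mOps Sp).add x y) :
    x ∈ (mOps Sp).add z ((mOps Sp).neg y) := by
  rcases x with _ | a
  · obtain rfl : z = y := by simpa using hz
    cases z <;> simp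
  rcases y with _ | b
  · obtain rfl : z = some a := by simpa using hz
    simp
  rcases z with _ | c
  · simp [none_mem_mOps_add.1 hz, h.m1_mul_m1_mul]
  · simpa [h.some_mem_mOps_add] using h.mem_DG_m1_mul_of_mem_DG (h.some_mem_mOps_add.1 hz)

theorem mOps_distrib (h : Sp.IsSpecialGroup) {x y z : Option G} (w : Option G)
    (hz : z ∈ (mOps Sp).add x y) :
    (mOps Sp).mul z w ∈ (mOps Sp).add ((mOps Sp).mul x w) ((mOps Sp).mul y w) := by
  rcases w with _ | g
  · simp
  rcases x with _ | a
  · obtain rfl : z = y := by simpa using hz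
    simp
  rcases y with _ | b
  · obtain rfl : z = some a := by simpa using hz
    simp
  rcases z with _ | c
  · simp [none_mem_mOps_add.1 hz, mul_assoc]
  · simpa [h.some_mem_mOps_add] using h.mul_mem_DG (h.some_mem_mOps_add.1 hz) g

theorem mOps_add_assoc_subset (h : Sp.IsSpecialGroup) (x y z : Option G) :
    (⋃ w ∈ (mOps Sp).add y z, (mOps Sp).add x w) ⊆
      (⋃ t ∈ (mOps Sp).add x y, (mOps Sp).add t z) := by
  intro u hu
  simp only [Set.mem_iUnion, exists_prop] at hu ⊢
  obtain ⟨w, hw, hu⟩ := hu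
  rcases x with _ | a
  · obtain rfl : u = w := by simpa using hu
    exact ⟨y, by simp, hw⟩
  rcases y with _ | b
  · obtain rfl : w = z := by simpa using hw
    exact ⟨some a, by simp, hu⟩
  rcases z with _ | c
  · obtain rfl : w = some b := by simpa using hw
    exact ⟨u, hu, by simp⟩
  rcases w with _ | d
  · obtain rfl : u = some a := by simpa using hu
    obtain rfl := none_mem_mOps_add.1 hw
    exact ⟨some a, h.some_mem_mOps_add.2 (h.left_mem_DG a b),
      h.some_mem_mOps_add.2 (h.left_mem_DG a _)⟩
  have hd := h.some_mem_mOps_add.1 hw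
  rcases u with _ | x
  · obtain rfl := none_mem_mOps_add.1 hu
    exact ⟨some (Sp.m1 * c), h.some_mem_mOps_add.2 (h.m1_mul_mem_DG_of_m1_mul_mem_DG hd),
      none_mem_mOps_add.2 (h.m1_mul_m1_mul c).symm⟩
  · obtain ⟨e, he, hx⟩ := h.mem_DG_assoc hd (h.some_mem_mOps_add.1 hu)
    exact ⟨some e, h.some_mem_mOps_add.2 he, h.some_mem_mOps_add.2 hx⟩

end IsSpecialGroup

end SpecialGroupOps

open SpecialGroupOps in
/-- if `(G, ≡, -1)` is a special group then `M(G) = G ∪ {0}` is a hyperfield. -/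
theorem mG_isHyperfield {G : Type*} [CommGroup G] (Sp : SpecialGroupOps G)
    (h : IsSpecialGroup Sp) : (mOps Sp).IsHyperfield := by
  exact
  { add_nonempty := h.mOps_add_nonempty
    add_comm := h.mOps_add_comm
    rev_left := h.mOps_rev_left
    rev_right := (mOps Sp).rev_right_of_rev_left h.mOps_add_comm h.mOps_rev_left
    zero_add := fun x y => by simp [mOps, eq_comm]
    add_assoc := (mOps Sp).add_assoc_of_subset h.mOps_add_comm h.mOps_add_assoc_subset
    mul_comm := fun x y => by cases x <;> cases y <;> simp [mul_comm]
    mul_assoc := fun x y z => by cases x <;> cases y <;> cases z <;> simp [mul_assoc]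
    one_mul := fun x => by cases x <;> simp [mOps]
    mul_zero := mOps_mul_none_right
    distrib := h.mOps_distrib
    zero_ne_one := (Option.some_ne_none (1 : G)).symm
    exists_inv := fun
      | none, h0 => absurd rfl h0
      | some g, _ => ⟨some g, by simp [mOps, h.exp2 g]⟩ }
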